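/- arXiv:math/9905017 — 3 statements merged into one kernel-verified Lean document; each statement's English description precedes it below -/
import Mathlib

section
/- Let X be a complex Banach space and λ, β ≥ 1. Suppose X is λ-extendably locally reflexive and X has the β-bounded approximation property. Then for every ε > 0 and all finite-dimensional subspaces F ⊆ X* and G ⊆ X**, there exists a finite-rank bounded linear operator U : X** → X** such that U(X**) ⊆ ι_X(X), ‖U‖ ≤ λβ + ε, and (Ug)(f) = g(f) for all g ∈ G and f ∈ F. -/
open NormedSpace

namespace NormedSpace

/-- The topological dual `E →L[𝕜] 𝕜` of a seminormed space `E`, as `NormedSpace.Dual` was in the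
older Mathlib (a `def` carrying the operator-norm instances). -/
def Dual (𝕜 : Type*) [NontriviallyNormedField 𝕜] (E : Type*) [SeminormedAddCommGroup E]
    [NormedSpace 𝕜 E] : Type _ :=
  E →L[𝕜] 𝕜

noncomputable instance (𝕜 : Type*) [NontriviallyNormedField 𝕜] (E : Type*) [SeminormedAddCommGroup E]
    [NormedSpace 𝕜 E] : SeminormedAddCommGroup (Dual 𝕜 E) :=
  ContinuousLinearMap.toSeminormedAddCommGroup

noncomputable instance (𝕜 : Type*) [NontriviallyNormedField 𝕜] (E : Type*) [SeminormedAddCommGroup E]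
    [NormedSpace 𝕜 E] : NormedSpace 𝕜 (Dual 𝕜 E) :=
  ContinuousLinearMap.toNormedSpace

instance (𝕜 : Type*) [NontriviallyNormedField 𝕜] (E : Type*) [SeminormedAddCommGroup E]
    [NormedSpace 𝕜 E] : FunLike (Dual 𝕜 E) E 𝕜 :=
  ContinuousLinearMap.funLike

end NormedSpace

/-- `X` is `λ`-extendably locally reflexive. -/
def IsELR (X : Type*) [NormedAddCommGroup X] [NormedSpace ℂ X] (lam : ℝ) : Prop :=
  ∀ (F : Subspace ℂ (Dual ℂ X)) (G : Subspace ℂ (Dual ℂ (Dual ℂ X))),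
    FiniteDimensional ℂ F → FiniteDimensional ℂ G →
    ∀ ε : ℝ, 0 < ε →
      ∃ T : Dual ℂ (Dual ℂ X) →L[ℂ] Dual ℂ (Dual ℂ X),
        (∀ g ∈ G, T g ∈ Set.range (inclusionInDoubleDual ℂ X)) ∧
        (∀ g ∈ G, ∀ f ∈ F, T g f = g f) ∧
        ‖T‖ < lam + ε

/-- `Z` has the `λ`-bounded approximation property. -/
def HasBAP (Z : Type*) [NormedAddCommGroup Z] [NormedSpace ℂ Z] (lam : ℝ) : Prop :=
  ∀ ε : ℝ, 0 < ε → ∀ D : Finset Z,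
    ∃ S : Z →L[ℂ] Z,
      FiniteDimensional ℂ (LinearMap.range (S : Z →ₗ[ℂ] Z)) ∧
      ‖S‖ ≤ lam ∧ ∀ z ∈ D, ‖S z - z‖ ≤ ε

/-! Extendable local reflexivity gives `T : X** → X**` sending `G` into `ι(X)` and preserving
the pairing of `G` with `F`, with `‖T‖ ≈ λ`. For a finite-rank `S : X → X` from the `β`-BAP, the
bitranspose `S**` maps `X**` into `X`, with `‖S**‖ ≤ ‖S‖`: it is `S ∘ P` for any finite-rank
`P : X** → X` reproducing each `z ∈ X**` on the finite-dimensional space `{ℓ ∘ S}`, and such `P`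
exist because restriction `X → E*` is onto for finite-dimensional `E ⊆ X*`. So `S** T` has finite
rank and norm about `λβ`, and since `S` nearly fixes the finite-dimensional space `ι⁻¹(T G)`, the
error `T - ι S** T` is small on `G`. It is removed exactly, at small cost in norm, by adding
`P ∘ (T - ι S** T) ∘ π`, where `P` reproduces `X**` on `F` and `π` is a bounded projection onto
`G`. -/

-- `Dual` is a plain `def`, so this instance of `E →L[𝕜] 𝕜` is not found through it.
instance (𝕜 : Type*) [NontriviallyNormedField 𝕜] (E : Type*) [SeminormedAddCommGroup E]
    [NormedSpace 𝕜 E] : T2Space (Dual 𝕜 E) :=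
  inferInstanceAs (T2Space (E →L[𝕜] 𝕜))

section FiniteDimensionalDual

variable {𝕜 : Type*} [NontriviallyNormedField 𝕜]
  {X Y : Type*} [NormedAddCommGroup X] [NormedSpace 𝕜 X] [NormedAddCommGroup Y] [NormedSpace 𝕜 Y]

theorem surjective_comp_subtypeL_inclusionInDoubleDual (F : Submodule 𝕜 (Dual 𝕜 X))
    [FiniteDimensional 𝕜 F] :
    Function.Surjective fun x : X => (inclusionInDoubleDual 𝕜 X x).comp F.subtypeL := by
  let B : F →ₗ[𝕜] X →ₗ[𝕜] 𝕜 := ContinuousLinearMap.coeLM 𝕜 ∘ₗ F.subtype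
  have hB : Function.Injective B :=
    ContinuousLinearMap.coe_injective.comp Subtype.val_injective
  intro φ
  obtain ⟨x, hx⟩ := LinearMap.flip_surjective_iff₁.mpr hB (φ : F →ₗ[𝕜] 𝕜)
  exact ⟨x, ContinuousLinearMap.ext fun f => LinearMap.congr_fun hx f⟩

theorem exists_hasFiniteRange_bidual_interpolation [CompleteSpace 𝕜] (F : Submodule 𝕜 (Dual 𝕜 X))
    [FiniteDimensional 𝕜 F] :
    ∃ P : Dual 𝕜 (Dual 𝕜 X) →L[𝕜] X, P.toLinearMap.HasFiniteRange ∧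
      ∀ z, ∀ f ∈ F, f (P z) = z f := by
  let res : Dual 𝕜 (Dual 𝕜 X) →L[𝕜] F →L[𝕜] 𝕜 :=
    (ContinuousLinearMap.compL 𝕜 F (Dual 𝕜 X) 𝕜).flip F.subtypeL
  obtain ⟨R, hR⟩ := (res.toLinearMap ∘ₗ (inclusionInDoubleDual 𝕜 X).toLinearMap)
    |>.exists_rightInverse_of_surjective
      (LinearMap.range_eq_top.mpr (surjective_comp_subtypeL_inclusionInDoubleDual F))
  refine ⟨R.toContinuousLinearMap.comp res, LinearMap.HasFiniteRange.of_finite_dom.comp_right _,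
    fun z f hf => ?_⟩
  exact congr($(LinearMap.congr_fun hR (res z)) ⟨f, hf⟩)

theorem ContinuousLinearMap.exists_bitranspose_of_hasFiniteRange [CompleteSpace 𝕜]
    (S : X →L[𝕜] Y) (hS : S.toLinearMap.HasFiniteRange) :
    ∃ A : Dual 𝕜 (Dual 𝕜 X) →L[𝕜] Y, A.toLinearMap.HasFiniteRange ∧
      ∀ z (ℓ : Dual 𝕜 Y), ℓ (A z) = z (ℓ.comp S) := by
  have : FiniteDimensional 𝕜 S.range := Module.Finite.iff_fg.mpr hS
  -- `ℓ ∘ S` factors through the restriction of `ℓ` to the finite-dimensional `range S`.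
  let F : Submodule 𝕜 (Dual 𝕜 X) :=
    LinearMap.range ((ContinuousLinearMap.compL 𝕜 X S.range 𝕜).flip S.rangeRestrict).toLinearMap
  have : FiniteDimensional 𝕜 F := LinearMap.finiteDimensional_range _
  obtain ⟨P, hP, hPF⟩ := exists_hasFiniteRange_bidual_interpolation F
  exact ⟨S.comp P, hP.comp_left S.toLinearMap,
    fun z ℓ => hPF z _ ⟨ℓ.comp S.range.subtypeL, rfl⟩⟩

end FiniteDimensionalDual

section RCLike

variable {𝕜 : Type*} [RCLike 𝕜]
  {X Y V : Type*} [NormedAddCommGroup X] [NormedSpace 𝕜 X] [NormedAddCommGroup Y] [NormedSpace 𝕜 Y]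
  [SeminormedAddCommGroup V] [NormedSpace 𝕜 V] [T2Space V]

theorem ContinuousLinearMap.exists_bidual_extension_of_hasFiniteRange (S : X →L[𝕜] Y)
    (hS : S.toLinearMap.HasFiniteRange) :
    ∃ A : Dual 𝕜 (Dual 𝕜 X) →L[𝕜] Y, A.toLinearMap.HasFiniteRange ∧ ‖A‖ ≤ ‖S‖ ∧
      ∀ x, A (inclusionInDoubleDual 𝕜 X x) = S x := by
  obtain ⟨A, hA, hAS⟩ := S.exists_bitranspose_of_hasFiniteRange hS
  refine ⟨A, hA, A.opNorm_le_bound (norm_nonneg S) fun z => ?_, fun x => ?_⟩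
  · refine norm_le_dual_bound 𝕜 _ (by positivity) fun ℓ => ?_
    calc ‖ℓ (A z)‖ = ‖z (ℓ.comp S)‖ := congrArg norm (hAS z ℓ)
      _ ≤ ‖z‖ * (‖ℓ‖ * ‖S‖) := z.le_opNorm_of_le (ℓ.opNorm_comp_le S)
      _ = ‖S‖ * ‖z‖ * ‖ℓ‖ := by ring
  · exact (SeparatingDual.eq_iff_forall_dual_eq (R := 𝕜)).mpr fun ℓ => hAS _ ℓ

theorem exists_hasFiniteRange_correction (F : Submodule 𝕜 (Dual 𝕜 X)) [FiniteDimensional 𝕜 F]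
    (G : Submodule 𝕜 V) [FiniteDimensional 𝕜 G] :
    ∃ K, 0 ≤ K ∧ ∀ (R : V →L[𝕜] Dual 𝕜 (Dual 𝕜 X)) (M : ℝ), 0 ≤ M →
      (∀ g ∈ G, ‖R g‖ ≤ M * ‖g‖) → ∃ D : V →L[𝕜] X, D.toLinearMap.HasFiniteRange ∧
        ‖D‖ ≤ K * M ∧ ∀ g ∈ G, ∀ f ∈ F, f (D g) = R g f := by
  obtain ⟨P, hP, hPF⟩ := exists_hasFiniteRange_bidual_interpolation F
  obtain ⟨π, hπ⟩ := Submodule.ClosedComplemented.of_finiteDimensional G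
  refine ⟨‖P‖ * ‖π‖, by positivity, fun R M hM hR => ?_⟩
  have hRG : ‖R.comp G.subtypeL‖ ≤ M :=
    ContinuousLinearMap.opNorm_le_bound _ hM fun g => hR g g.2
  refine ⟨P.comp ((R.comp G.subtypeL).comp π), hP.comp_right _, ?_, fun g hg f hf => ?_⟩
  · calc _ ≤ ‖P‖ * (‖R.comp G.subtypeL‖ * ‖π‖) :=
          (P.opNorm_comp_le _).trans (by gcongr; exact ContinuousLinearMap.opNorm_comp_le _ _)
      _ ≤ ‖P‖ * (M * ‖π‖) := by gcongr
      _ = ‖P‖ * ‖π‖ * M := by ring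
  · simp [hπ ⟨g, hg⟩, hPF _ f hf]

end RCLike

theorem HasBAP.exists_norm_sub_le_of_finiteDimensional {Z : Type*} [NormedAddCommGroup Z]
    [NormedSpace ℂ Z] {β : ℝ} (h : HasBAP Z β) (W : Submodule ℂ Z) [FiniteDimensional ℂ W]
    {δ : ℝ} (hδ : 0 < δ) :
    ∃ S : Z →L[ℂ] Z, S.toLinearMap.HasFiniteRange ∧ ‖S‖ ≤ β ∧ ∀ x ∈ W, ‖S x - x‖ ≤ δ * ‖x‖ := by
  classical
  let v := Module.finBasis ℂ W
  obtain ⟨C, hC, hCv⟩ := v.exists_opNorm_le (F := Z)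
  obtain ⟨S, hS, hSβ, hSv⟩ := h (δ / C) (by positivity) (Finset.univ.image fun i => (v i : Z))
  refine ⟨S, Module.Finite.iff_fg.mp hS, hSβ, fun x hx => ?_⟩
  have hSW : ‖(S - 1).comp W.subtypeL‖ ≤ δ :=
    calc _ ≤ C * (δ / C) := hCv (by positivity) fun i => by
            simpa using hSv _ (Finset.mem_image_of_mem _ (Finset.mem_univ i))
      _ = δ := by field_simp
  simpa using ((S - 1).comp W.subtypeL).le_of_opNorm_le hSW ⟨x, hx⟩

theorem HasBAP.exists_norm_sub_le_on_bidual {X : Type*} [NormedAddCommGroup X] [NormedSpace ℂ X]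
    {β : ℝ} (hBAP : HasBAP X β) (E : Submodule ℂ (Dual ℂ (Dual ℂ X))) [FiniteDimensional ℂ E]
    {δ : ℝ} (hδ : 0 < δ) :
    ∃ A : Dual ℂ (Dual ℂ X) →L[ℂ] X, A.toLinearMap.HasFiniteRange ∧ ‖A‖ ≤ β ∧
      ∀ x, inclusionInDoubleDual ℂ X x ∈ E → ‖A (inclusionInDoubleDual ℂ X x) - x‖ ≤ δ * ‖x‖ := by
  let ι : X →L[ℂ] Dual ℂ (Dual ℂ X) := inclusionInDoubleDual ℂ X
  let W : Submodule ℂ X := E.comap ι.toLinearMap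
  have : FiniteDimensional ℂ W :=
    Module.Finite.of_injective (ι.toLinearMap.restrict (q := E) fun _ hx => hx)
      fun a b hab => Subtype.ext ((inclusionInDoubleDualLi ℂ).injective congr(($hab).1))
  obtain ⟨S, hS, hSβ, hSW⟩ := hBAP.exists_norm_sub_le_of_finiteDimensional W hδ
  obtain ⟨A, hA, hAS, hAι⟩ := S.exists_bidual_extension_of_hasFiniteRange hS
  exact ⟨A, hA, hAS.trans hSβ, fun x hx => hAι x ▸ hSW x hx⟩

theorem HasBAP.exists_hasFiniteRange_lift {X V : Type*} [NormedAddCommGroup X] [NormedSpace ℂ X]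
    [SeminormedAddCommGroup V] [NormedSpace ℂ V] [T2Space V] {β : ℝ} (hBAP : HasBAP X β)
    (F : Submodule ℂ (Dual ℂ X)) [FiniteDimensional ℂ F] (G : Submodule ℂ V)
    [FiniteDimensional ℂ G] (T : V →L[ℂ] Dual ℂ (Dual ℂ X))
    (hT : ∀ g ∈ G, T g ∈ Set.range (inclusionInDoubleDual ℂ X)) {ε : ℝ} (hε : 0 < ε) :
    ∃ B : V →L[ℂ] X, B.toLinearMap.HasFiniteRange ∧ ‖B‖ ≤ β * ‖T‖ + ε ∧
      ∀ g ∈ G, ∀ f ∈ F, f (B g) = T g f := by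
  obtain ⟨K, hK, hcorr⟩ := exists_hasFiniteRange_correction F G
  set δ := ε / (K * ‖T‖ + 1)
  have hδ : 0 < δ := by positivity
  obtain ⟨A, hA, hAβ, hAT⟩ := hBAP.exists_norm_sub_le_on_bidual (G.map T.toLinearMap) hδ
  let ι : X →L[ℂ] Dual ℂ (Dual ℂ X) := inclusionInDoubleDual ℂ X
  have hErr : ∀ g ∈ G, ‖(T - ι.comp (A.comp T)) g‖ ≤ δ * ‖T‖ * ‖g‖ := by
    intro g hg
    obtain ⟨x, hx⟩ := hT g hg
    calc ‖(T - ι.comp (A.comp T)) g‖ = ‖ι (A (ι x) - x)‖ := by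
          change ‖T g - ι (A (T g))‖ = _
          rw [map_sub, norm_sub_rev, ← hx]
          rfl
      _ ≤ ‖A (ι x) - x‖ := double_dual_bound ℂ X _
      _ ≤ δ * ‖x‖ := hAT x ⟨g, hg, hx.symm⟩
      _ = δ * ‖T g‖ := by rw [← hx]; exact congrArg _ ((inclusionInDoubleDualLi ℂ).norm_map x).symm
      _ ≤ δ * ‖T‖ * ‖g‖ := by rw [mul_assoc]; gcongr; exact T.le_opNorm g
  obtain ⟨D, hD, hDK, hDF⟩ := hcorr _ _ (by positivity) hErr
  refine ⟨A.comp T + D, (hA.comp_right _).add hD, ?_, fun g hg f hf => ?_⟩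
  · have hDε : K * (δ * ‖T‖) ≤ ε :=
      calc K * (δ * ‖T‖) ≤ (K * ‖T‖ + 1) * δ := by nlinarith
        _ = ε := mul_div_cancel₀ _ (by positivity)
    exact norm_add_le_of_le ((A.opNorm_comp_le T).trans (by gcongr)) (hDK.trans hDε)
  · calc f ((A.comp T + D) g) = f (A (T g)) + f (D g) := ContinuousLinearMap.map_add f _ _
      _ = f (A (T g)) + (T g f - f (A (T g))) := by rw [hDF g hg f hf]; rfl
      _ = T g f := add_sub_cancel _ _

theorem stmt2_general (X : Type*) [NormedAddCommGroup X] [NormedSpace ℂ X]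
    (lam β : ℝ) (hβ : 1 ≤ β)
    (hELR : IsELR X lam) (hBAP : HasBAP X β) :
    ∀ ε : ℝ, 0 < ε →
    ∀ (F : Subspace ℂ (Dual ℂ X)) (G : Subspace ℂ (Dual ℂ (Dual ℂ X))),
      FiniteDimensional ℂ F → FiniteDimensional ℂ G →
      ∃ U : Dual ℂ (Dual ℂ X) →L[ℂ] Dual ℂ (Dual ℂ X),
        FiniteDimensional ℂ (LinearMap.range (U : Dual ℂ (Dual ℂ X) →ₗ[ℂ] Dual ℂ (Dual ℂ X))) ∧
        (∀ z : Dual ℂ (Dual ℂ X), U z ∈ Set.range (inclusionInDoubleDual ℂ X)) ∧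
        ‖U‖ ≤ lam * β + ε ∧
        (∀ g ∈ G, ∀ f ∈ F, U g f = g f) := by
  intro ε hε F G _ _
  have hβ₀ : 0 < β := zero_lt_one.trans_le hβ
  obtain ⟨T, hTι, hTF, hT⟩ := hELR F G ‹_› ‹_› (ε / (2 * β)) (by positivity)
  obtain ⟨B, hB, hBT, hBF⟩ := hBAP.exists_hasFiniteRange_lift F G T hTι (half_pos hε)
  let ι : X →L[ℂ] Dual ℂ (Dual ℂ X) := inclusionInDoubleDual ℂ X
  refine ⟨ι.comp B, Module.Finite.iff_fg.mpr (hB.comp_left _),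
    fun z => ⟨B z, rfl⟩, ?_, fun g hg f hf => (hBF g hg f hf).trans (hTF g hg f hf)⟩
  calc ‖ι.comp B‖ ≤ ‖B‖ :=
        (ContinuousLinearMap.opNorm_comp_le _ _).trans
          (mul_le_of_le_one_left (norm_nonneg B) (inclusionInDoubleDual_norm_le ℂ X))
    _ ≤ β * (lam + ε / (2 * β)) + ε / 2 := hBT.trans (by gcongr)
    _ = lam * β + ε := by field_simp; ring

/-- If `X` is `λ`-extendably locally reflexive and has the `β`-bounded approximation
property, then for every `ε > 0` and all finite-dimensional `F ⊆ X*`, `G ⊆ X**` there is a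
finite-rank operator `U : X** → X**` into `ι_X(X)` of norm `≤ λβ + ε` with
`(Ug)(f) = g(f)` for all `g ∈ G`, `f ∈ F`. -/
theorem stmt2 (X : Type*) [NormedAddCommGroup X] [NormedSpace ℂ X] [CompleteSpace X]
    (lam β : ℝ) (hlam : 1 ≤ lam) (hβ : 1 ≤ β)
    (hELR : IsELR X lam) (hBAP : HasBAP X β) :
    ∀ ε : ℝ, 0 < ε →
    ∀ (F : Subspace ℂ (Dual ℂ X)) (G : Subspace ℂ (Dual ℂ (Dual ℂ X))),
      FiniteDimensional ℂ F → FiniteDimensional ℂ G →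
      ∃ U : Dual ℂ (Dual ℂ X) →L[ℂ] Dual ℂ (Dual ℂ X),
        FiniteDimensional ℂ (LinearMap.range (U : Dual ℂ (Dual ℂ X) →ₗ[ℂ] Dual ℂ (Dual ℂ X))) ∧
        (∀ z : Dual ℂ (Dual ℂ X), U z ∈ Set.range (inclusionInDoubleDual ℂ X)) ∧
        ‖U‖ ≤ lam * β + ε ∧
        (∀ g ∈ G, ∀ f ∈ F, U g f = g f) :=
  stmt2_general X lam β hβ hELR hBAP
end

section
/- Let μ ∈ B(ℓ²)* be a bounded linear functional that annihilates every compact operator on ℓ², and let M_1, …, M_n be subsets of the positive integers that are pairwise almost disjoint, i.e. M_i ∩ M_j is finite whenever i ≠ j. Then Σ_{i=1}^n sup{ |μ(P_{M_i} T P_{M_i})| : T ∈ B(ℓ²), ‖T‖ ≤ 1 } ≤ ‖μ‖. -/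
/-!
Removing from each `M i` the finitely many points it shares with the other sets gives pairwise
disjoint `N i ⊆ M i`. Since `P_{M i} - P_{N i} = P_{M i \ N i}` has finite rank and `μ` kills
compact operators, `μ (P_{M i} T P_{M i}) = μ (P_{N i} T P_{N i})`. For contractions `T i` and
scalars `c i` of modulus at most one, the block-diagonal operator `∑ i, c i • P_{N i} T i P_{N i}`
is again a contraction, because the `N i` are disjoint (Pythagoras, twice). Choosing `c i` to
rotate each `μ (P_{N i} T i P_{N i})` onto the positive axis gives
`∑ i, |μ (P_{N i} T i P_{N i})| ≤ ‖μ‖`, and the suprema are then taken one index at a time.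
-/

open scoped ENNReal

noncomputable section

/-- The complex Hilbert space `ℓ²` of square-summable sequences indexed by the
positive integers. -/
abbrev H2 : Type := lp (fun _ : ℕ+ => ℂ) 2

/-- The standard orthonormal basis vectors of `ℓ²`. -/
def e (i : ℕ+) : H2 := lp.single 2 i 1

/-- The closed linear span of `{e_i : i ∈ M}` in `ℓ²`. -/
def spanM (M : Set ℕ+) : Submodule ℂ H2 :=
  (Submodule.span ℂ (e '' M)).topologicalClosure

/-- The orthogonal projection `P_M` of `ℓ²` onto the closed linear span of
`{e_i : i ∈ M}`, as a bounded operator on `ℓ²`. -/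
def projM (M : Set ℕ+) : H2 →L[ℂ] H2 :=
  haveI : CompleteSpace (spanM M) :=
    (Submodule.isClosed_topologicalClosure _).completeSpace_coe
  (spanM M).subtypeL.comp ((spanM M).orthogonalProjectionOnto)

open scoped lp

open Function in
theorem Set.exists_pairwiseDisjoint_subset_finite_sdiff {ι α : Type*} [Finite ι] (M : ι → Set α)
    (hM : Pairwise fun i j => (M i ∩ M j).Finite) :
    ∃ N : ι → Set α, (∀ i, N i ⊆ M i) ∧ (∀ i, (M i \ N i).Finite) ∧ Pairwise (Disjoint on N) := by
  refine ⟨fun i => M i \ ⋃ (j) (_ : j ≠ i), M j, fun i => sdiff_subset, fun i => ?_, ?_⟩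
  · have hsub : M i \ (M i \ ⋃ (j) (_ : j ≠ i), M j) ⊆ ⋃ (j) (_ : j ≠ i), M i ∩ M j := by
      rw [sdiff_sdiff_right_self, inter_iUnion₂]
    exact (finite_iUnion fun j => finite_iUnion fun hji => @hM i j (Ne.symm hji)).subset hsub
  · intro i j hij
    exact disjoint_left.2 fun x hxi hxj => hxj.2 (mem_iUnion₂.2 ⟨i, hij, hxi.1⟩)

open Finset in
theorem Finset.sum_ciSup_le {ι X α : Type*} [Nonempty X] [ConditionallyCompleteLattice α]
    [AddCommGroup α] [IsOrderedAddMonoid α] (t : Finset ι) {f : ι → X → α} {C : α}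
    (h : ∀ x : ι → X, ∑ i ∈ t, f i (x i) ≤ C) : ∑ i ∈ t, ⨆ y, f i y ≤ C := by
  classical
  induction t using Finset.induction_on generalizing C with
  | empty => simpa using h (Classical.arbitrary _)
  | insert a t ha ih =>
    rw [sum_insert ha]
    refine ciSup_add_le fun y => ?_
    rw [add_comm, ← le_sub_iff_add_le]
    refine ih fun x => le_sub_iff_add_le.2 ?_
    have := h (Function.update x a y)
    rwa [sum_insert ha, Function.update_self, add_comm,
      sum_congr rfl fun i hi => by rw [Function.update_of_ne (ne_of_mem_of_not_mem hi ha)]] at this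

theorem Real.sum_biSup_le {ι X : Type*} (t : Finset ι) {s : Set X} (hs : s.Nonempty)
    {f : ι → X → ℝ} (hf : ∀ i x, 0 ≤ f i x) {C : ℝ}
    (h : ∀ x : ι → X, (∀ i, x i ∈ s) → ∑ i ∈ t, f i (x i) ≤ C) :
    ∑ i ∈ t, ⨆ y ∈ s, f i y ≤ C := by
  classical
  have : Nonempty X := ⟨hs.some⟩
  refine Finset.sum_ciSup_le t fun x => ?_
  -- for `x i ∉ s` the inner supremum is the junk value `sSup ∅ = 0`, so move `x i` into `s`
  set x' : ι → X := fun i => if x i ∈ s then x i else hs.some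
  calc ∑ i ∈ t, ⨆ _ : x i ∈ s, f i (x i) ≤ ∑ i ∈ t, f i (x' i) := by
        refine Finset.sum_le_sum fun i _ => ?_
        by_cases hx : x i ∈ s
        · simp [x', hx]
        · simpa [hx] using hf i (x' i)
    _ ≤ C := h x' fun i => by by_cases hx : x i ∈ s <;> simp [x', hx, hs.some_mem]

open Finset in
theorem norm_sum_sq_eq_sum_norm_sq_of_pairwise {𝕜 ι E : Type*} [RCLike 𝕜] [NormedAddCommGroup E]
    [InnerProductSpace 𝕜 E] (s : Finset ι) {v : ι → E}
    (h : (s : Set ι).Pairwise fun i j => inner 𝕜 (v i) (v j) = 0) :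
    ‖∑ i ∈ s, v i‖ ^ 2 = ∑ i ∈ s, ‖v i‖ ^ 2 := by
  classical
  induction s using Finset.induction_on with
  | empty => simp
  | insert a s ha ih =>
    rw [coe_insert, Set.pairwise_insert] at h
    have horth : inner 𝕜 (v a) (∑ i ∈ s, v i) = 0 := by
      rw [inner_sum]
      exact sum_eq_zero fun j hj => (h.2 j hj (ne_of_mem_of_not_mem hj ha).symm).1
    rw [sum_insert ha, sum_insert ha, ← ih h.1, sq, sq, sq,
      norm_add_sq_eq_norm_sq_add_norm_sq_of_inner_eq_zero _ _ horth]

open Finset in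
theorem StrongDual.sum_norm_apply_le_opNorm {𝕜 E ι : Type*} [RCLike 𝕜] [SeminormedAddCommGroup E]
    [NormedSpace 𝕜 E] (μ : StrongDual 𝕜 E) (s : Finset ι) (v : ι → E)
    (hv : ∀ c : ι → 𝕜, (∀ i ∈ s, ‖c i‖ ≤ 1) → ‖∑ i ∈ s, c i • v i‖ ≤ 1) :
    ∑ i ∈ s, ‖μ (v i)‖ ≤ ‖μ‖ := by
  set c : ι → 𝕜 := fun i => (starRingEnd 𝕜) (μ (v i)) / ‖μ (v i)‖
  have hc (i : ι) : c i * μ (v i) = ‖μ (v i)‖ := by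
    rw [div_mul_eq_mul_div, RCLike.conj_mul, sq, mul_self_div_self]
  have hμ : μ (∑ i ∈ s, c i • v i) = ((∑ i ∈ s, ‖μ (v i)‖ : ℝ) : 𝕜) := by
    simp [map_sum, hc]
  calc ∑ i ∈ s, ‖μ (v i)‖ = ‖μ (∑ i ∈ s, c i • v i)‖ := by
        rw [hμ, RCLike.norm_ofReal, abs_of_nonneg (sum_nonneg fun _ _ => norm_nonneg _)]
    _ ≤ ‖μ‖ * 1 := μ.le_of_opNorm_le_of_le le_rfl (hv c fun i _ => by
        simpa [c, norm_div] using div_self_le_one ‖μ (v i)‖)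
    _ = ‖μ‖ := mul_one _

theorem StrongDual.apply_comp_comp_eq_of_isCompactOperator_sub {𝕜 E : Type*}
    [NontriviallyNormedField 𝕜] [NormedAddCommGroup E] [NormedSpace 𝕜 E]
    {μ : StrongDual 𝕜 (E →L[𝕜] E)} (hμ : ∀ S : E →L[𝕜] E, IsCompactOperator S → μ S = 0)
    {P Q : E →L[𝕜] E} (hPQ : IsCompactOperator (P - Q)) (T : E →L[𝕜] E) :
    μ (P.comp (T.comp P)) = μ (Q.comp (T.comp Q)) := by
  have hsplit : P.comp (T.comp P) - Q.comp (T.comp Q) =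
      (P - Q).comp (T.comp P) + Q.comp (T.comp (P - Q)) := by
    simp only [ContinuousLinearMap.sub_comp, ContinuousLinearMap.comp_sub]
    abel
  rw [← sub_eq_zero, ← map_sub, hsplit, map_add, hμ _ (hPQ.comp_clm _),
    hμ _ (hPQ.clm_comp (Q.comp T)), add_zero]

namespace lp

section NormedSpace

variable {α 𝕜 E : Type*} {p : ENNReal} [NontriviallyNormedField 𝕜]
  [NormedAddCommGroup E] [NormedSpace 𝕜 E] [Fact (1 ≤ p)]

variable (𝕜 E p) in
def indicatorCLM (s : Set α) : ℓ^p(α, E) →L[𝕜] ℓ^p(α, E) :=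
  LinearMap.mkContinuous
    { toFun x := ⟨s.indicator ⇑x, (lp.memℓp x).mono' fun _ => norm_indicator_le_norm_self _ _⟩
      map_add' _ _ := lp.ext <| s.indicator_add' _ _
      map_smul' c _ := lp.ext <| s.indicator_const_smul c _ }
    1 fun x => by
      rw [one_mul]
      exact lp.norm_mono (zero_lt_one.trans_le Fact.out).ne' fun _ => norm_indicator_le_norm_self _ _

@[simp]
theorem indicatorCLM_apply (s : Set α) (x : ℓ^p(α, E)) (i : α) :
    indicatorCLM 𝕜 E p s x i = s.indicator x i := rfl

theorem norm_indicatorCLM_le (s : Set α) : ‖indicatorCLM 𝕜 E p s‖ ≤ 1 :=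
  LinearMap.mkContinuous_norm_le _ zero_le_one _

theorem norm_indicatorCLM_apply_le (s : Set α) (x : ℓ^p(α, E)) : ‖indicatorCLM 𝕜 E p s x‖ ≤ ‖x‖ :=
  ((indicatorCLM 𝕜 E p s).le_of_opNorm_le (norm_indicatorCLM_le s) x).trans_eq (one_mul _)

theorem indicatorCLM_sub_of_subset {s t : Set α} (h : t ⊆ s) :
    indicatorCLM 𝕜 E p s - indicatorCLM 𝕜 E p t = indicatorCLM 𝕜 E p (s \ t) :=
  ContinuousLinearMap.ext fun _ => lp.ext (Set.indicator_sdiff h _).symm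

theorem indicatorCLM_biUnion {κ : Type*} (t : Finset κ) {N : κ → Set α}
    (hN : (t : Set κ).PairwiseDisjoint N) :
    indicatorCLM 𝕜 E p (⋃ k ∈ t, N k) = ∑ k ∈ t, indicatorCLM 𝕜 E p (N k) :=
  ContinuousLinearMap.ext fun x => lp.ext <| funext fun i => by
    rw [sum_apply, lp.coeFn_sum, Finset.sum_apply, indicatorCLM_apply,
      Finset.indicator_biUnion_apply t N hN]
    rfl

theorem indicatorCLM_eq_sum_single [DecidableEq α] (s : Finset α) :
    indicatorCLM 𝕜 E p s = ∑ i ∈ s, (singleContinuousLinearMap 𝕜 _ p i).comp (evalCLM 𝕜 _ p i) :=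
  ContinuousLinearMap.ext fun x => lp.ext <| funext fun i => by
    rw [sum_apply, lp.coeFn_sum, Finset.sum_apply]
    simp [Set.indicator_apply, evalCLM]

theorem isCompactOperator_indicatorCLM [LocallyCompactSpace E] {s : Set α} (hs : s.Finite) :
    IsCompactOperator (indicatorCLM 𝕜 E p s) := by
  classical
  rw [← hs.coe_toFinset, indicatorCLM_eq_sum_single]
  refine Finset.sum_induction _ (fun T : ℓ^p(α, E) →L[𝕜] ℓ^p(α, E) => IsCompactOperator T)
    (fun _ _ => IsCompactOperator.add) isCompactOperator_zero fun i _ => ?_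
  exact (isCompactOperator_of_locallyCompactSpace_dom (evalCLM 𝕜 (fun _ : α => E) p i)).clm_comp
    (singleContinuousLinearMap 𝕜 (fun _ : α => E) p i)

end NormedSpace

section InnerProductSpace

variable {α 𝕜 E : Type*} [RCLike 𝕜] [NormedAddCommGroup E] [InnerProductSpace 𝕜 E]

theorem inner_indicatorCLM_of_disjoint {s t : Set α} (h : Disjoint s t) (x y : ℓ²(α, E)) :
    inner 𝕜 (indicatorCLM 𝕜 E 2 s x) (indicatorCLM 𝕜 E 2 t y) = 0 := by
  have hterm (i : α) : inner 𝕜 (s.indicator x i) (t.indicator y i) = 0 := by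
    by_cases hs : i ∈ s
    · simp [Set.indicator_of_notMem (h.notMem_of_mem_left hs)]
    · simp [hs]
  simp [lp.inner_eq_tsum, hterm]

theorem norm_sum_indicatorCLM_comp_le {κ : Type*} (t : Finset κ) {N : κ → Set α}
    (hN : (t : Set κ).PairwiseDisjoint N) {T : κ → ℓ²(α, E) →L[𝕜] ℓ²(α, E)}
    (hT : ∀ k ∈ t, ‖T k‖ ≤ 1) :
    ‖∑ k ∈ t, (indicatorCLM 𝕜 E 2 (N k)).comp ((T k).comp (indicatorCLM 𝕜 E 2 (N k)))‖ ≤ 1 := by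
  set P := fun k => indicatorCLM 𝕜 E 2 (N k)
  refine ContinuousLinearMap.opNorm_le_bound _ zero_le_one fun x => ?_
  have horth (y : κ → ℓ²(α, E)) :
      (t : Set κ).Pairwise fun i j => inner 𝕜 (P i (y i)) (P j (y j)) = 0 :=
    fun i hi j hj hij => inner_indicatorCLM_of_disjoint (hN hi hj hij) _ _
  have hsq : ‖∑ k ∈ t, P k (T k (P k x))‖ ^ 2 ≤ ‖x‖ ^ 2 :=
    calc ‖∑ k ∈ t, P k (T k (P k x))‖ ^ 2 = ∑ k ∈ t, ‖P k (T k (P k x))‖ ^ 2 :=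
          norm_sum_sq_eq_sum_norm_sq_of_pairwise t (horth fun k => T k (P k x))
      _ ≤ ∑ k ∈ t, ‖P k x‖ ^ 2 := by
          gcongr with k hk
          exact (norm_indicatorCLM_apply_le _ _).trans
            (((T k).le_of_opNorm_le (hT k hk) _).trans_eq (one_mul _))
      _ = ‖∑ k ∈ t, P k x‖ ^ 2 := (norm_sum_sq_eq_sum_norm_sq_of_pairwise t (horth fun _ => x)).symm
      _ = ‖indicatorCLM 𝕜 E 2 (⋃ k ∈ t, N k) x‖ ^ 2 := by rw [indicatorCLM_biUnion t hN, sum_apply]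
      _ ≤ ‖x‖ ^ 2 := by gcongr; exact norm_indicatorCLM_apply_le _ _
  rw [one_mul, sum_apply]
  exact (pow_le_pow_iff_left₀ (norm_nonneg _) (norm_nonneg _) two_ne_zero).1 hsq

end InnerProductSpace

end lp

theorem mem_spanM_of_forall_notMem {M : Set ℕ+} {x : H2} (h : ∀ i ∉ M, x i = 0) :
    x ∈ spanM M := by
  have hterm (i : ℕ+) : lp.single 2 i (x i) ∈ spanM M := by
    by_cases hi : i ∈ M
    · rw [show lp.single 2 i (x i) = x i • e i by rw [e, ← lp.single_smul, smul_eq_mul, mul_one]]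
      exact Submodule.smul_mem _ _
        (Submodule.le_topologicalClosure _ (Submodule.subset_span ⟨i, hi, rfl⟩))
    · rw [h i hi, lp.single_zero]
      exact Submodule.zero_mem _
  exact (Submodule.isClosed_topologicalClosure _).mem_of_tendsto (lp.hasSum_single (by norm_num) x)
    (Filter.Eventually.of_forall fun _ => Submodule.sum_mem _ fun i _ => hterm i)

theorem mem_spanM_orthogonal_of_forall_mem {M : Set ℕ+} {x : H2} (h : ∀ i ∈ M, x i = 0) :
    x ∈ (spanM M)ᗮ := by
  rw [spanM, Submodule.orthogonal_closure, ← Submodule.span_singleton_le_iff_mem]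
  refine Submodule.isOrtho_span.2 ?_
  rintro _ rfl _ ⟨i, hi, rfl⟩
  simp [e, lp.inner_single_right, h i hi]

theorem projM_eq_indicatorCLM (M : Set ℕ+) : projM M = lp.indicatorCLM ℂ ℂ 2 M := by
  have : CompleteSpace (spanM M) := (Submodule.isClosed_topologicalClosure _).completeSpace_coe
  refine ContinuousLinearMap.ext fun x => Submodule.eq_starProjection_of_mem_orthogonal ?_ ?_
  · exact mem_spanM_of_forall_notMem fun i hi => Set.indicator_of_notMem hi _
  · refine mem_spanM_orthogonal_of_forall_mem fun i hi => ?_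
    simp [Set.indicator_of_mem hi]

/-- If `μ ∈ B(ℓ²)*` annihilates the compact operators and `M_1, …, M_n` are pairwise
almost disjoint subsets of the positive integers, then
`Σ_i sup{ |μ(P_{M_i} T P_{M_i})| : ‖T‖ ≤ 1 } ≤ ‖μ‖`. -/
theorem stmt11 (μ : StrongDual ℂ (H2 →L[ℂ] H2))
    (hann : ∀ S : H2 →L[ℂ] H2, IsCompactOperator ⇑S → μ S = 0)
    (n : ℕ) (M : Fin n → Set ℕ+)
    (hdisj : ∀ i j : Fin n, i ≠ j → (M i ∩ M j).Finite) :
    ∑ i : Fin n, (⨆ T ∈ Metric.closedBall (0 : H2 →L[ℂ] H2) 1,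
        ‖μ ((projM (M i)).comp (T.comp (projM (M i))))‖) ≤ ‖μ‖ := by
  obtain ⟨N, hNM, hfin, hN⟩ := Set.exists_pairwiseDisjoint_subset_finite_sdiff M hdisj
  set P := fun i => lp.indicatorCLM ℂ ℂ 2 (N i)
  have hcompress (i : Fin n) (T : H2 →L[ℂ] H2) :
      μ ((projM (M i)).comp (T.comp (projM (M i)))) = μ ((P i).comp (T.comp (P i))) := by
    refine StrongDual.apply_comp_comp_eq_of_isCompactOperator_sub hann ?_ T
    rw [projM_eq_indicatorCLM, lp.indicatorCLM_sub_of_subset (hNM i)]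
    exact lp.isCompactOperator_indicatorCLM (hfin i)
  simp_rw [hcompress]
  refine Real.sum_biSup_le _ ⟨0, Metric.mem_closedBall_self zero_le_one⟩ (fun _ _ => norm_nonneg _)
    fun T hT => StrongDual.sum_norm_apply_le_opNorm μ _ _ fun c hc => ?_
  have hsmul (i : Fin n) :
      c i • (P i).comp ((T i).comp (P i)) = (P i).comp ((c i • T i).comp (P i)) := by
    rw [ContinuousLinearMap.smul_comp, ContinuousLinearMap.comp_smul]
  simp only [hsmul]
  refine lp.norm_sum_indicatorCLM_comp_le _ (hN.set_pairwise _) fun i _ => ?_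
  calc ‖c i • T i‖ ≤ ‖c i‖ * ‖T i‖ := ContinuousLinearMap.opNorm_smul_le _ _
    _ ≤ 1 * 1 := by gcongr; exacts [hc i (Finset.mem_univ i), mem_closedBall_zero_iff.1 (hT i)]
    _ = 1 := one_mul 1
end
end

section
/- Let X be a closed linear subspace of a complex Banach space Y, let X̃ be a complex Banach space, and let T : X → X̃ be a bounded linear bijection with ‖T‖ = 1. Then there exist a complex Banach space Ỹ, a linear isometric embedding j : X̃ → Ỹ, and a bounded linear bijection T̃ : Y → Ỹ such that T̃x = j(Tx) for all x ∈ X, ‖T̃‖ = 1, and ‖T̃‖·‖T̃⁻¹‖ ≤ 2‖T⁻¹‖ + 1. -/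
/-!
Take for `Ỹ` the Banach-space pushout of the inclusion `ι : X → Y` and of `T`, i.e. the ℓ¹-sum
`Y ⊕₁ X̃` modulo `{(x, -T x) : x ∈ X}`, which is the graph of `-S` for `S = ι ∘ T⁻¹ : X̃ → Y`.
Since `‖T‖ ≤ 1`, `S` does not shrink norms, and then any representative `(y, z')` of the class
of `(0, z)` has `y = S (z - z')`, whence `‖z‖ ≤ ‖z - z'‖ + ‖z'‖ ≤ ‖y‖ + ‖z'‖`: the map
`z ↦ [(0, z)]` is isometric. The map `y ↦ [(y, 0)]` has norm at most `1` and inverse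
`[(y, z)] ↦ y + S z` of norm at most `1 + ‖S‖ ≤ 1 + ‖T⁻¹‖`.
-/

open ContinuousLinearMap

theorem Submodule.norm_liftQL_le {𝕜 M N : Type*} [NontriviallyNormedField 𝕜]
    [SeminormedAddCommGroup M] [NormedSpace 𝕜 M] [SeminormedAddCommGroup N] [NormedSpace 𝕜 N]
    (S : Submodule 𝕜 M) (f : M →L[𝕜] N) (h : S ≤ f.ker) : ‖S.liftQL f h‖ ≤ ‖f‖ := by
  refine opNorm_le_bound _ (norm_nonneg f) fun q => ?_
  rcases (norm_nonneg f).eq_or_lt' with hf | hf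
  · obtain ⟨m, rfl⟩ := S.mkQ_surjective q
    simpa [hf] using f.le_opNorm m
  · refine (div_le_iff₀' hf).1 (QuotientAddGroup.le_norm_iff.2 fun m hm => ?_)
    subst hm
    exact (div_le_iff₀' hf).2 (f.le_opNorm m)

variable {𝕜 E F : Type*} [NontriviallyNormedField 𝕜] [NormedAddCommGroup E] [NormedSpace 𝕜 E]
  [NormedAddCommGroup F] [NormedSpace 𝕜 F]

namespace ContinuousLinearMap

variable (S : F →L[𝕜] E)

def l1Coprod : WithLp 1 (E × F) →L[𝕜] E :=
  ((ContinuousLinearMap.id 𝕜 E).coprod S).comp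
    (WithLp.prodContinuousLinearEquiv 1 𝕜 E F).toContinuousLinearMap

@[simp]
theorem l1Coprod_apply (m : WithLp 1 (E × F)) : S.l1Coprod m = m.fst + S m.snd := rfl

theorem norm_l1Coprod_le : ‖S.l1Coprod‖ ≤ 1 + ‖S‖ := by
  refine opNorm_le_bound _ (by positivity) fun m => ?_
  rw [l1Coprod_apply, WithLp.prod_norm_eq_of_L1]
  calc ‖m.fst + S m.snd‖ ≤ ‖m.fst‖ + ‖S‖ * ‖m.snd‖ :=
        (norm_add_le _ _).trans (by gcongr; exact S.le_opNorm _)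
    _ ≤ (1 + ‖S‖) * (‖m.fst‖ + ‖m.snd‖) := by
        nlinarith [norm_nonneg m.fst, norm_nonneg m.snd, norm_nonneg S]

instance : IsClosed (S.l1Coprod.ker : Set (WithLp 1 (E × F))) := isClosed_ker _

end ContinuousLinearMap

abbrev BanachPushout (S : F →L[𝕜] E) : Type _ := WithLp 1 (E × F) ⧸ S.l1Coprod.ker

namespace BanachPushout

variable (S : F →L[𝕜] E)

noncomputable def inl : E →L[𝕜] BanachPushout S :=
  S.l1Coprod.ker.mkQL.comp
    ((WithLp.prodContinuousLinearEquiv 1 𝕜 E F).symm.toContinuousLinearMap.comp (.inl 𝕜 E F))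

theorem inl_apply (y : E) : inl S y = Submodule.Quotient.mk (WithLp.toLp 1 (y, 0)) := rfl

theorem norm_mk_toLp_zero (hS : ∀ z, ‖z‖ ≤ ‖S z‖) (z : F) :
    ‖(Submodule.Quotient.mk (WithLp.toLp 1 (0, z)) : BanachPushout S)‖ = ‖z‖ := by
  refine le_antisymm ((Submodule.Quotient.norm_mk_le _ _).trans (by simp)) ?_
  refine QuotientAddGroup.le_norm_iff.2 fun m hm => ?_
  change Submodule.Quotient.mk m = _ at hm
  rw [Submodule.Quotient.eq, LinearMap.mem_ker] at hm
  simp only [coe_coe, l1Coprod_apply, WithLp.toLp_fst, WithLp.toLp_snd, map_sub] at hm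
  have hfst : m.fst = S (z - m.snd) := by
    rw [map_sub, ← sub_eq_zero, ← hm]
    abel
  have hle : ‖z - m.snd‖ ≤ ‖m.fst‖ := hfst ▸ hS _
  linarith [norm_sub_norm_le z m.snd, WithLp.prod_norm_eq_of_L1 m]

noncomputable def inr (hS : ∀ z, ‖z‖ ≤ ‖S z‖) : F →ₗᵢ[𝕜] BanachPushout S where
  toLinearMap := S.l1Coprod.ker.mkQ ∘ₗ
    ((WithLp.prodContinuousLinearEquiv 1 𝕜 E F).symm.toLinearMap ∘ₗ .inr 𝕜 E F)
  norm_map' := norm_mk_toLp_zero S hS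

theorem inr_apply (hS : ∀ z, ‖z‖ ≤ ‖S z‖) (z : F) :
    inr S hS z = Submodule.Quotient.mk (WithLp.toLp 1 (0, z)) := rfl

noncomputable def desc : BanachPushout S →L[𝕜] E :=
  S.l1Coprod.ker.liftQL S.l1Coprod le_rfl

theorem desc_mk (m : WithLp 1 (E × F)) :
    desc S (Submodule.Quotient.mk m) = m.fst + S m.snd := rfl

theorem desc_inl (y : E) : desc S (inl S y) = y := by
  simp [inl_apply, desc_mk]

theorem inl_desc (q : BanachPushout S) : inl S (desc S q) = q := by
  obtain ⟨m, rfl⟩ := Submodule.Quotient.mk_surjective _ q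
  rw [desc_mk, inl_apply, Submodule.Quotient.eq, LinearMap.mem_ker]
  simp

theorem inl_apply_self (hS : ∀ z, ‖z‖ ≤ ‖S z‖) (z : F) : inl S (S z) = inr S hS z := by
  rw [inl_apply, inr_apply, Submodule.Quotient.eq, LinearMap.mem_ker]
  simp

theorem norm_inl_le : ‖inl S‖ ≤ 1 := by
  refine opNorm_le_bound _ zero_le_one fun y => ?_
  simpa [inl_apply] using Submodule.Quotient.norm_mk_le _ (WithLp.toLp 1 (y, (0 : F)))

theorem norm_desc_le : ‖desc S‖ ≤ 1 + ‖S‖ :=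
  (Submodule.norm_liftQL_le _ _ _).trans S.norm_l1Coprod_le

end BanachPushout

open BanachPushout in
theorem stmt14_general {Y : Type u} [NormedAddCommGroup Y] [NormedSpace ℂ Y] [CompleteSpace Y]
    {Xt : Type u} [NormedAddCommGroup Xt] [NormedSpace ℂ Xt] [CompleteSpace Xt]
    (X : Subspace ℂ Y)
    (T : X →L[ℂ] Xt) (hT : ‖T‖ = 1)
    (Tinv : Xt →L[ℂ] X) (hTl : ∀ x : X, Tinv (T x) = x) (hTr : ∀ x' : Xt, T (Tinv x') = x') :
    ∃ (Yt : Type u) (gYt : NormedAddCommGroup Yt)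
      (sYt : @NormedSpace ℂ Yt _ gYt.toSeminormedAddCommGroup),
      letI := gYt
      letI := sYt
      CompleteSpace Yt ∧
      ∃ (j : Xt →ₗᵢ[ℂ] Yt) (Tt : Y →L[ℂ] Yt) (Ttinv : Yt →L[ℂ] Y),
        (∀ y : Y, Ttinv (Tt y) = y) ∧
        (∀ yt : Yt, Tt (Ttinv yt) = yt) ∧
        (∀ x : X, Tt (x : Y) = j (T x)) ∧
        ‖Tt‖ = 1 ∧
        ‖Tt‖ * ‖Ttinv‖ ≤ 2 * ‖Tinv‖ + 1 := by
  let S : Xt →L[ℂ] Y := X.subtypeL.comp Tinv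
  have hS : ∀ z, ‖z‖ ≤ ‖S z‖ := fun z =>
    calc ‖z‖ = ‖T (Tinv z)‖ := by rw [hTr]
      _ ≤ ‖Tinv z‖ := by simpa [hT] using T.le_opNorm (Tinv z)
  have hext : ∀ x : X, inl S x = inr S hS (T x) := fun x => by
    rw [← inl_apply_self]
    simp [S, hTl]
  have hnorm : ‖inl S‖ = 1 := by
    refine le_antisymm (norm_inl_le S) (hT ▸ T.opNorm_le_bound (norm_nonneg (inl S)) fun x => ?_)
    rw [← (inr S hS).norm_map, ← hext]
    exact (inl S).le_opNorm x
  refine ⟨BanachPushout S, inferInstance, inferInstance, inferInstance, inr S hS, inl S, desc S,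
    desc_inl S, inl_desc S, hext, hnorm, ?_⟩
  calc ‖inl S‖ * ‖desc S‖ ≤ 1 + ‖S‖ := by rw [hnorm, one_mul]; exact norm_desc_le S
    _ ≤ 1 + ‖Tinv‖ := by
      gcongr
      exact (opNorm_comp_le _ _).trans (mul_le_of_le_one_left (norm_nonneg _) X.norm_subtypeL_le)
    _ ≤ 2 * ‖Tinv‖ + 1 := by linarith [norm_nonneg Tinv]

/-- Let `X` be a closed subspace of a complex Banach space `Y` and `T : X → X̃` a
bounded linear bijection onto a complex Banach space `X̃` with `‖T‖ = 1` (its inverse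
`Tinv` is bounded).  Then there are a complex Banach space `Ỹ`, a linear isometric
embedding `j : X̃ → Ỹ`, and a bounded linear bijection `T̃ : Y → Ỹ` extending `j ∘ T`
with `‖T̃‖ = 1` and `‖T̃‖·‖T̃⁻¹‖ ≤ 2‖T⁻¹‖ + 1`. -/
theorem stmt14 {Y : Type u} [NormedAddCommGroup Y] [NormedSpace ℂ Y] [CompleteSpace Y]
    {Xt : Type u} [NormedAddCommGroup Xt] [NormedSpace ℂ Xt] [CompleteSpace Xt]
    (X : Subspace ℂ Y) (hX : IsClosed (X : Set Y))
    (T : X →L[ℂ] Xt) (hT : ‖T‖ = 1)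
    (Tinv : Xt →L[ℂ] X) (hTl : ∀ x : X, Tinv (T x) = x) (hTr : ∀ x' : Xt, T (Tinv x') = x') :
    ∃ (Yt : Type u) (gYt : NormedAddCommGroup Yt)
      (sYt : @NormedSpace ℂ Yt _ gYt.toSeminormedAddCommGroup),
      letI := gYt
      letI := sYt
      CompleteSpace Yt ∧
      ∃ (j : Xt →ₗᵢ[ℂ] Yt) (Tt : Y →L[ℂ] Yt) (Ttinv : Yt →L[ℂ] Y),
        (∀ y : Y, Ttinv (Tt y) = y) ∧
        (∀ yt : Yt, Tt (Ttinv yt) = yt) ∧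
        (∀ x : X, Tt (x : Y) = j (T x)) ∧
        ‖Tt‖ = 1 ∧
        ‖Tt‖ * ‖Ttinv‖ ≤ 2 * ‖Tinv‖ + 1 :=
  stmt14_general X T hT Tinv hTl hTr
end
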